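/- arXiv:2206.10022 — 2 statements merged into one kernel-verified Lean document; each statement's English description precedes it below -/
import Mathlib

section
/- Let G be a finite connected graph with self-loops on at least 2 vertices, and suppose the quotient graph 𝒞(G) (obtained by collapsing vertices with equal closed neighborhoods) contains no path of length greater than 2 between any two vertices. Then 𝒞(G) is a star graph: there exists a vertex v₁ of 𝒞(G) adjacent to all other vertices, and no two vertices distinct from v₁ are adjacent. -/
/-- From a walk between two vertices with different closed neighborhoods,
extract an edge between two vertices with different closed neighborhoods. -/
lemma exists_edge_aux {V : Type*} (N : V → Finset V) {a b : V}
    (h : Relation.ReflTransGen (fun a b => a ∈ N b) a b) (hne : N a ≠ N b) :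
    ∃ x y, x ∈ N y ∧ N x ≠ N y := by
  induction h with
  | refl => exact absurd rfl hne
  | tail hwalk hstep ih =>
    rename_i w c
    by_cases hwc : N w = N c
    · exact ih (fun h => hne (h.trans hwc))
    · exact ⟨w, c, hstep, hwc⟩

/-- If `c` is a "center" (every class different from `c`'s is adjacent to it),
then no two other classes are adjacent. -/
lemma no_leaf_edges {V : Type*} (N : V → Finset V) (hself : ∀ v, v ∈ N v)
    (hsymm : ∀ u v : V, u ∈ N v ↔ v ∈ N u)
    (hnopath : ∀ a b c d : V,
      N a ≠ N b → N a ≠ N c → N a ≠ N d → N b ≠ N c → N b ≠ N d → N c ≠ N d →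
      ¬ ((a ∈ N b) ∧ (b ∈ N c) ∧ (c ∈ N d)))
    (c : V) (hc : ∀ u, N u ≠ N c → u ∈ N c) :
    ∀ u w : V, N u ≠ N c → N w ≠ N c → N u ≠ N w → u ∉ N w := by
  intro p q hp hq hpq hmem
  by_cases hr : ∃ r, N r ≠ N p ∧ N r ≠ N q ∧ N r ≠ N c
  · obtain ⟨r, h1, h2, h3⟩ := hr
    exact hnopath p q c r hpq hp h1.symm hq h2.symm (fun h => h3 h.symm)
      ⟨hmem, hc q hq, (hsymm c r).mpr (hc r h3)⟩
  · push_neg at hr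
    apply hpq
    ext v
    have hpv : p ∈ N v := by
      by_cases h1 : N v = N p
      · exact h1 ▸ hself p
      · by_cases h2 : N v = N q
        · exact h2 ▸ hmem
        · exact (hr v h1 h2) ▸ hc p hp
    have hqv : q ∈ N v := by
      by_cases h1 : N v = N p
      · exact h1 ▸ (hsymm q p).mpr hmem
      · by_cases h2 : N v = N q
        · exact h2 ▸ hself q
        · exact (hr v h1 h2) ▸ hc q hq
    rw [hsymm v p, hsymm v q]
    exact iff_of_true hpv hqv

/-- Let `G` be a finite connected graph with self-loops on at least two vertices
(closed neighborhoods `N v`, connectivity via the adjacency relation `u ∈ N v`).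
Suppose the quotient graph `𝒞(G)` obtained by collapsing vertices with equal
closed neighborhoods contains no path of length greater than two between any two
vertices (no path of three edges through four distinct classes).  Then `𝒞(G)` is
a star: there is a vertex `v₁` whose class is adjacent to every other class, and
no two classes distinct from that of `v₁` are adjacent.  Here the adjacency of
distinct classes is `A u v := u ∈ N v ∧ N u ≠ N v`. -/
theorem collapsed_graph_is_star {V : Type*} [Fintype V]
    (N : V → Finset V) (hself : ∀ v, v ∈ N v)
    (hsymm : ∀ u v : V, u ∈ N v ↔ v ∈ N u)
    (hcard : 2 ≤ Fintype.card V)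
    (hconn : ∀ u v : V, Relation.ReflTransGen (fun a b => a ∈ N b) u v)
    (hnopath : ∀ a b c d : V,
      N a ≠ N b → N a ≠ N c → N a ≠ N d → N b ≠ N c → N b ≠ N d → N c ≠ N d →
      ¬ ((a ∈ N b) ∧ (b ∈ N c) ∧ (c ∈ N d))) :
    ∃ v₁ : V,
      (∀ u : V, N u ≠ N v₁ → u ∈ N v₁) ∧
      (∀ u w : V, N u ≠ N v₁ → N w ≠ N v₁ → N u ≠ N w → u ∉ N w) := by
  by_cases hall : ∀ u v : V, N u = N v
  · have : Nonempty V := Fintype.card_pos_iff.mp (by omega)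
    obtain ⟨v⟩ := this
    exact ⟨v, fun u h => absurd (hall u v) h,
      fun u w hu _ _ _ => hu (hall u v)⟩
  · push_neg at hall
    obtain ⟨a, b, hab⟩ := hall
    obtain ⟨x, y, hxy, hxyne⟩ := exists_edge_aux N (hconn a b) hab
    -- every vertex is in the same class as x or y, or adjacent to x or y
    have hS : ∀ u : V, N u = N x ∨ N u = N y ∨ u ∈ N x ∨ u ∈ N y := by
      intro u
      induction hconn x u with
      | refl => exact Or.inl rfl
      | tail hwalk hstep ih =>
        rename_i w c
        have hcw : c ∈ N w := (hsymm c w).mpr hstep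
        rcases ih with h | h | h | h
        · exact Or.inr (Or.inr (Or.inl (h ▸ hcw)))
        · exact Or.inr (Or.inr (Or.inr (h ▸ hcw)))
        · by_cases hwx : N w = N x
          · exact Or.inr (Or.inr (Or.inl (hwx ▸ hcw)))
          · by_cases hwy : N w = N y
            · exact Or.inr (Or.inr (Or.inr (hwy ▸ hcw)))
            · by_contra hcon
              push_neg at hcon
              obtain ⟨h1, h2, h3, h4⟩ := hcon
              have hcwne : N c ≠ N w := by
                intro he
                have hx1 : x ∈ N w := (hsymm x w).mpr h
                rw [← he] at hx1
                exact h3 ((hsymm x c).mp hx1)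
              exact hnopath c w x y hcwne h1 h2 hwx hwy hxyne ⟨hcw, h, hxy⟩
        · by_cases hwx : N w = N x
          · exact Or.inr (Or.inr (Or.inl (hwx ▸ hcw)))
          · by_cases hwy : N w = N y
            · exact Or.inr (Or.inr (Or.inr (hwy ▸ hcw)))
            · by_contra hcon
              push_neg at hcon
              obtain ⟨h1, h2, h3, h4⟩ := hcon
              have hcwne : N c ≠ N w := by
                intro he
                have hy1 : y ∈ N w := (hsymm y w).mpr h
                rw [← he] at hy1
                exact h4 ((hsymm y c).mp hy1)
              exact hnopath c w y x hcwne h2 h1 hwy hwx hxyne.symm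
                ⟨hcw, h, (hsymm y x).mpr hxy⟩
    by_cases hx : ∀ u, N u ≠ N x → u ∈ N x
    · exact ⟨x, hx, no_leaf_edges N hself hsymm hnopath x hx⟩
    · push_neg at hx
      obtain ⟨u, hux, hunx⟩ := hx
      have hxnu : x ∉ N u := fun h => hunx ((hsymm x u).mp h)
      have huy : N u ≠ N y := fun h => hxnu (h ▸ hxy)
      have huNy : u ∈ N y := by
        rcases hS u with h | h | h | h
        · exact absurd h hux
        · exact absurd h huy
        · exact absurd h hunx
        · exact h
      have hyNu : y ∈ N u := (hsymm y u).mpr huNy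
      have hy_center : ∀ w, N w ≠ N y → w ∈ N y := by
        intro w hw
        by_contra hwny
        rcases hS w with h1 | h1 | h1 | h1
        · exact hwny ((hsymm w y).mpr (h1 ▸ ((hsymm x y).mp hxy)))
        · exact hw h1
        · by_cases hwx : N w = N x
          · exact hwny ((hsymm w y).mpr (hwx ▸ ((hsymm x y).mp hxy)))
          · have hwu : N w ≠ N u := by
              intro he
              have : x ∈ N w := (hsymm x w).mpr h1
              exact hxnu (he ▸ this)
            exact hnopath w x y u hwx hw hwu hxyne (fun h => hux h.symm)
              (fun h => huy h.symm) ⟨h1, hxy, hyNu⟩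
        · exact hwny h1
      exact ⟨y, hy_center, no_leaf_edges N hself hsymm hnopath y hy_center⟩
end

section
/- LP value under collapsing equal-neighborhood vertices: Let G be a finite graph with self-loops, and suppose u ≠ v satisfy N_u = N_v and Δ_u ≥ Δ_v (so v has the larger mean). Then the LP c*(Δ, G) = min{⟨x, Δ⟩ : x ≥ 0, Σ_{j∈N_i} x_j ≥ 1/Δ_i² for all suboptimal i} has the same value as the LP obtained by (a) deleting the constraint of u (it is implied by that of v, being weaker), and (b) restricting to solutions with x_u = 0 (any feasible x can be modified by moving the mass of x_u onto x_v without increasing the objective or violating constraints). -/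
/-! Moving the mass `x u` onto `v` keeps every neighbourhood sum, because `u` and `v` lie in
exactly the same neighbourhoods, and changes the cost by `x u * (Δ v - Δ u) ≤ 0`; so the
restricted LP is no worse. Conversely the constraint of `u` is implied by that of `v` when
`Δ v > 0`, and when `Δ v ≤ 0` it can be met by adding free mass at `v ∈ N u`. -/

open Finset Matrix

section Transfer

variable {ι : Type*} [DecidableEq ι] (x : ι → ℝ) (u v : ι)

def transfer : ι → ℝ :=
  x + Pi.single v (x u) - Pi.single u (x u)

variable {x u v}

theorem transfer_apply_left (huv : u ≠ v) : transfer x u v u = 0 := by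
  simp [transfer, huv]

theorem transfer_nonneg (hx : ∀ i, 0 ≤ x i) (i : ι) : 0 ≤ transfer x u v i := by
  simp only [transfer, Pi.sub_apply, Pi.add_apply, Pi.single_apply]
  have hxi := hx i
  have hxu := hx u
  split_ifs <;> subst_vars <;> linarith

theorem sum_transfer {s : Finset ι} (hs : u ∈ s ↔ v ∈ s) :
    ∑ j ∈ s, transfer x u v j = ∑ j ∈ s, x j := by
  simp only [transfer, Pi.sub_apply, Pi.add_apply, sum_sub_distrib, sum_add_distrib,
    sum_pi_single', hs]
  ring

theorem sum_add_single (t : ℝ) (s : Finset ι) :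
    ∑ j ∈ s, (x + Pi.single v t : ι → ℝ) j = ∑ j ∈ s, x j + if v ∈ s then t else 0 := by
  simp only [Pi.add_apply, sum_add_distrib, sum_pi_single']

theorem transfer_dotProduct [Fintype ι] (Δ : ι → ℝ) :
    transfer x u v ⬝ᵥ Δ = x ⬝ᵥ Δ + x u * (Δ v - Δ u) := by
  simp only [transfer, sub_dotProduct, add_dotProduct, single_dotProduct]
  ring

end Transfer

theorem mem_iff_mem_of_neighborhood_eq {ι : Type*} {N : ι → Finset ι}
    (hsymm : ∀ i j, i ∈ N j ↔ j ∈ N i) {u v : ι} (hN : N u = N v) (i : ι) :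
    u ∈ N i ↔ v ∈ N i := by
  rw [hsymm, hN, ← hsymm]

theorem one_div_sq_le_sum_of_neighborhood_eq {ι : Type*} {N : ι → Finset ι} {Δ x : ι → ℝ}
    {u v : ι} (hN : N u = N v) (hv : 0 < Δ v) (hge : Δ v ≤ Δ u)
    (h : 1 / Δ v ^ 2 ≤ ∑ j ∈ N v, x j) :
    1 / Δ u ^ 2 ≤ ∑ j ∈ N u, x j := by
  rw [hN]
  refine le_trans ?_ h
  gcongr

section Cover

variable {ι : Type*} [Fintype ι] [DecidableEq ι] {N : ι → Finset ι} {Δ x : ι → ℝ} {u v : ι}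

theorem exists_cover_eq_zero_at_le (hsymm : ∀ i j, i ∈ N j ↔ j ∈ N i) (huv : u ≠ v)
    (hN : N u = N v) (hge : Δ v ≤ Δ u) (hx0 : ∀ i, 0 ≤ x i)
    (hx : ∀ i, 0 < Δ i → 1 / Δ i ^ 2 ≤ ∑ j ∈ N i, x j) :
    ∃ y : ι → ℝ, (∀ i, 0 ≤ y i) ∧ y u = 0 ∧
      (∀ i, 0 < Δ i → 1 / Δ i ^ 2 ≤ ∑ j ∈ N i, y j) ∧ y ⬝ᵥ Δ ≤ x ⬝ᵥ Δ := by
  refine ⟨transfer x u v, transfer_nonneg hx0, transfer_apply_left huv, fun i hi => ?_, ?_⟩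
  · rw [sum_transfer (mem_iff_mem_of_neighborhood_eq hsymm hN i)]
    exact hx i hi
  · rw [transfer_dotProduct]
    exact add_le_of_nonpos_right (mul_nonpos_of_nonneg_of_nonpos (hx0 u) (sub_nonpos.2 hge))

theorem exists_cover_le_of_cover_ne (hvu : v ∈ N u) (huv : u ≠ v) (hN : N u = N v)
    (hge : Δ v ≤ Δ u) (hx0 : ∀ i, 0 ≤ x i)
    (hx : ∀ i, i ≠ u → 0 < Δ i → 1 / Δ i ^ 2 ≤ ∑ j ∈ N i, x j) :
    ∃ y : ι → ℝ, (∀ i, 0 ≤ y i) ∧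
      (∀ i, 0 < Δ i → 1 / Δ i ^ 2 ≤ ∑ j ∈ N i, y j) ∧ y ⬝ᵥ Δ ≤ x ⬝ᵥ Δ := by
  rcases lt_or_ge 0 (Δ v) with hv | hv
  · refine ⟨x, hx0, fun i hi => ?_, le_rfl⟩
    rcases eq_or_ne i u with rfl | hiu
    · exact one_div_sq_le_sum_of_neighborhood_eq hN hv hge (hx v huv.symm hv)
    · exact hx i hiu hi
  set t : ℝ := 1 / Δ u ^ 2
  have ht : 0 ≤ t := by positivity
  have hy0 : 0 ≤ x + Pi.single v t := add_nonneg hx0 (Pi.single_nonneg.mpr ht)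
  refine ⟨x + Pi.single v t, hy0, fun i hi => ?_, ?_⟩
  · rw [sum_add_single]
    rcases eq_or_ne i u with rfl | hiu
    · rw [if_pos hvu]
      linarith [sum_nonneg fun j (_ : j ∈ N i) => hx0 j]
    · split_ifs <;> linarith [hx i hiu hi]
  · rw [add_dotProduct, single_dotProduct]
    exact add_le_of_nonpos_right (mul_nonpos_of_nonneg_of_nonpos ht hv)

end Cover

theorem lp_collapse_equal_neighborhoods_general (K : ℕ) (N : Fin K → Finset (Fin K))
    (hself : ∀ i, i ∈ N i) (hsymm : ∀ i j, i ∈ N j ↔ j ∈ N i)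
    (Δ : Fin K → ℝ)
    (u v : Fin K) (huv : u ≠ v) (hN : N u = N v) (hge : Δ v ≤ Δ u) :
    sInf {c : ℝ | ∃ x : Fin K → ℝ,
        (∀ i, 0 ≤ x i) ∧
        (∀ i, 0 < Δ i → 1 / (Δ i) ^ 2 ≤ ∑ j ∈ N i, x j) ∧
        c = ∑ i, x i * Δ i} =
    sInf {c : ℝ | ∃ x : Fin K → ℝ,
        (∀ i, 0 ≤ x i) ∧ x u = 0 ∧
        (∀ i, i ≠ u → 0 < Δ i → 1 / (Δ i) ^ 2 ≤ ∑ j ∈ N i, x j) ∧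
        c = ∑ i, x i * Δ i} := by
  refine csInf_eq_csInf_of_forall_exists_le ?_ ?_
  · rintro _ ⟨x, hx0, hx, rfl⟩
    obtain ⟨y, hy0, hyu, hy, hyx⟩ := exists_cover_eq_zero_at_le hsymm huv hN hge hx0 hx
    exact ⟨_, ⟨y, hy0, hyu, fun i _ => hy i, rfl⟩, hyx⟩
  · rintro _ ⟨x, hx0, -, hx, rfl⟩
    obtain ⟨y, hy0, hy, hyx⟩ :=
      exists_cover_le_of_cover_ne (hN ▸ hself v) huv hN hge hx0 hx
    exact ⟨_, ⟨y, hy0, hy, rfl⟩, hyx⟩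

/-- LP value under collapsing equal-neighborhood vertices.  Let `G` have
self-loops with closed neighborhoods `N i` (symmetric), gaps `Δ`, and suppose
`u ≠ v` satisfy `N u = N v` and `Δ u ≥ Δ v`.  Then the LP
`min {⟨x,Δ⟩ : x ≥ 0, ∑_{j ∈ N i} x j ≥ 1/Δ i² for all suboptimal i}` has the
same value as the LP obtained by dropping the constraint of `u` and restricting
to solutions with `x u = 0`. -/
theorem lp_collapse_equal_neighborhoods (K : ℕ) (N : Fin K → Finset (Fin K))
    (hself : ∀ i, i ∈ N i) (hsymm : ∀ i j, i ∈ N j ↔ j ∈ N i)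
    (Δ : Fin K → ℝ) (hΔ : ∀ i, 0 ≤ Δ i)
    (u v : Fin K) (huv : u ≠ v) (hN : N u = N v) (hge : Δ v ≤ Δ u) :
    sInf {c : ℝ | ∃ x : Fin K → ℝ,
        (∀ i, 0 ≤ x i) ∧
        (∀ i, 0 < Δ i → 1 / (Δ i) ^ 2 ≤ ∑ j ∈ N i, x j) ∧
        c = ∑ i, x i * Δ i} =
    sInf {c : ℝ | ∃ x : Fin K → ℝ,
        (∀ i, 0 ≤ x i) ∧ x u = 0 ∧
        (∀ i, i ≠ u → 0 < Δ i → 1 / (Δ i) ^ 2 ≤ ∑ j ∈ N i, x j) ∧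
        c = ∑ i, x i * Δ i} :=
  lp_collapse_equal_neighborhoods_general K N hself hsymm Δ u v huv hN hge
end
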